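/- arXiv:1412.4082 — 8 statements merged into one kernel-verified Lean document; each statement's English description precedes it below -/
import Mathlib

section
/- Let (Q, R̃) and (Q̃, R) be complete cotorsion pairs in an abelian category with enough structure, and let W be a thick class. If Q̃ = Q ∩ W and R̃ ⊆ W, then R̃ = W ∩ R; that is, (Q, W, R) is a Hovey triple. -/
open CategoryTheory Limits

universe w v u

section Preamble

variable {A : Type u} [Category.{v} A] [Abelian A] [HasExt.{w} A]

/-- `Ext^n(X, Y) = 0`. -/
def extVanish (X Y : A) (n : ℕ) : Prop := Subsingleton (Abelian.Ext X Y n)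

/-- The right `Ext¹`-orthogonal class. -/
def rightPerp (𝒳 : Set A) : Set A := {Y | ∀ X ∈ 𝒳, extVanish X Y 1}

/-- The left `Ext¹`-orthogonal class. -/
def leftPerp (𝒴 : Set A) : Set A := {X | ∀ Y ∈ 𝒴, extVanish X Y 1}

/-- `(𝒳, 𝒴)` is a cotorsion pair. -/
def IsCotorsionPair (𝒳 𝒴 : Set A) : Prop := 𝒴 = rightPerp 𝒳 ∧ 𝒳 = leftPerp 𝒴

/-- `(𝒳, 𝒴)` is a complete cotorsion pair: it has enough injectives and enough
projectives. -/
def IsCompleteCP (𝒳 𝒴 : Set A) : Prop :=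
  IsCotorsionPair 𝒳 𝒴 ∧
  (∀ M : A, ∃ S : ShortComplex A, S.ShortExact ∧ S.X₁ = M ∧ S.X₂ ∈ 𝒴 ∧ S.X₃ ∈ 𝒳) ∧
  (∀ M : A, ∃ S : ShortComplex A, S.ShortExact ∧ S.X₁ ∈ 𝒴 ∧ S.X₂ ∈ 𝒳 ∧ S.X₃ = M)

/-- `(𝒳, 𝒴)` is a hereditary cotorsion pair: `Ext^i(X, Y) = 0` for all `i ≥ 1`. -/
def IsHereditaryCP (𝒳 𝒴 : Set A) : Prop :=
  IsCotorsionPair 𝒳 𝒴 ∧ ∀ n : ℕ, 1 ≤ n → ∀ X ∈ 𝒳, ∀ Y ∈ 𝒴, extVanish X Y n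

/-- `X` is a retract of `Y`. -/
def IsRetractOf (X Y : A) : Prop := ∃ (i : X ⟶ Y) (r : Y ⟶ X), i ≫ r = 𝟙 X

/-- A class is thick if it is closed under retracts and satisfies two out of three
on short exact sequences. -/
def IsThick (𝒲 : Set A) : Prop :=
  (∀ X Y : A, IsRetractOf X Y → Y ∈ 𝒲 → X ∈ 𝒲) ∧
  ∀ S : ShortComplex A, S.ShortExact →
    ((S.X₁ ∈ 𝒲 → S.X₂ ∈ 𝒲 → S.X₃ ∈ 𝒲) ∧ (S.X₁ ∈ 𝒲 → S.X₃ ∈ 𝒲 → S.X₂ ∈ 𝒲) ∧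
      (S.X₂ ∈ 𝒲 → S.X₃ ∈ 𝒲 → S.X₁ ∈ 𝒲))

/-- A Hovey triple `(𝒞, 𝒲, ℱ)`, i.e. an abelian model structure. -/
def IsHoveyTriple (𝒞 𝒲 ℱ : Set A) : Prop :=
  IsThick 𝒲 ∧ IsCompleteCP (𝒞 ∩ 𝒲) ℱ ∧ IsCompleteCP 𝒞 (𝒲 ∩ ℱ)

/-- A hereditary Hovey triple: both associated cotorsion pairs are hereditary. -/
def IsHereditaryHoveyTriple (𝒞 𝒲 ℱ : Set A) : Prop :=
  IsHoveyTriple 𝒞 𝒲 ℱ ∧ IsHereditaryCP (𝒞 ∩ 𝒲) ℱ ∧ IsHereditaryCP 𝒞 (𝒲 ∩ ℱ)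

end Preamble


section Aux

variable {A : Type u} [Category.{v} A] [Abelian A] [HasExt.{w} A]

/-- If a short exact sequence has vanishing extension class, then `Ext¹(X, X₁)`
vanishes whenever `Ext¹(X, X₂)` does. -/
lemma extVanish_of_section {S : ShortComplex A} (hS : S.ShortExact) (X : A)
    (h2 : extVanish X S.X₂ 1) (h31 : extVanish S.X₃ S.X₁ 1) :
    extVanish X S.X₁ 1 := by
  have : Subsingleton (Abelian.Ext S.X₃ S.X₁ 1) := h31
  obtain ⟨x₂, hx₂⟩ := Abelian.Ext.contravariant_sequence_exact₁ hS S.X₁ (Abelian.Ext.mk₀ (𝟙 S.X₁))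
    (n₁ := 1) rfl (Subsingleton.elim _ _)
  have key : ∀ e : Abelian.Ext X S.X₁ 1, e = 0 := by
    intro e
    have : Subsingleton (Abelian.Ext X S.X₂ 1) := h2
    calc e = e.comp (Abelian.Ext.mk₀ (𝟙 S.X₁)) (add_zero 1) := by simp
    _ = e.comp ((Abelian.Ext.mk₀ S.f).comp x₂ (zero_add 0)) (add_zero 1) := by rw [hx₂]
    _ = ((e.comp (Abelian.Ext.mk₀ S.f) (add_zero 1)).comp x₂ (add_zero 1)) := by
        rw [Abelian.Ext.comp_assoc_of_second_deg_zero]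
    _ = ((0 : Abelian.Ext X S.X₂ 1).comp x₂ (add_zero 1)) := by
        rw [Subsingleton.elim (e.comp (Abelian.Ext.mk₀ S.f) (add_zero 1)) 0]
    _ = 0 := by simp
  exact ⟨fun a b => by rw [key a, key b]⟩

end Aux

theorem statement0 {A : Type u} [Category.{v} A] [Abelian A] [HasExt.{w} A]
    (Q R tQ tR 𝒲 : Set A)
    (h1 : IsCompleteCP Q tR) (h2 : IsCompleteCP tQ R) (hW : IsThick 𝒲)
    (hQ : tQ = Q ∩ 𝒲) (hR : tR ⊆ 𝒲) :
    tR = 𝒲 ∩ R ∧ IsHoveyTriple Q 𝒲 R := by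
  obtain ⟨⟨htR_eq, hQ_eq⟩, h1inj, h1proj⟩ := h1
  obtain ⟨⟨hR_eq, htQ_eq⟩, h2inj, h2proj⟩ := h2
  have key : tR = 𝒲 ∩ R := by
    apply Set.Subset.antisymm
    · intro Y hY
      refine ⟨hR hY, ?_⟩
      rw [hR_eq]
      intro X hX
      have hXQ : X ∈ Q := (hQ ▸ hX).1
      rw [htR_eq] at hY
      exact hY X hXQ
    · rintro Y ⟨hYW, hYR⟩
      obtain ⟨S, hS, hS1, hS2, hS3⟩ := h1inj Y
      have hX3W : S.X₃ ∈ 𝒲 := (hW.2 S hS).1 (hS1 ▸ hYW) (hR hS2)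
      have hX3tQ : S.X₃ ∈ tQ := hQ ▸ ⟨hS3, hX3W⟩
      have h31 : extVanish S.X₃ S.X₁ 1 := by
        rw [hR_eq] at hYR
        exact hS1 ▸ hYR S.X₃ hX3tQ
      rw [htR_eq]
      intro X hXQ
      have h2v : extVanish X S.X₂ 1 := by
        rw [htR_eq] at hS2
        exact hS2 X hXQ
      have := extVanish_of_section hS X h2v h31
      exact hS1 ▸ this
  exact ⟨key, hW, hQ ▸ ⟨⟨hR_eq, htQ_eq⟩, h2inj, h2proj⟩,
    key ▸ ⟨⟨htR_eq, hQ_eq⟩, h1inj, h1proj⟩⟩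
end

section
/- Let (Q, R̃) and (Q̃, R) be complete cotorsion pairs in an abelian category, and let W be a thick class. If R̃ = W ∩ R and Q̃ ⊆ W, then Q̃ = Q ∩ W; that is, (Q, W, R) is a Hovey triple. -/
open CategoryTheory Limits

universe w v u

theorem statement1 {A : Type u} [Category.{v} A] [Abelian A] [HasExt.{w} A]
    (Q R tQ tR 𝒲 : Set A)
    (h1 : IsCompleteCP Q tR) (h2 : IsCompleteCP tQ R) (hW : IsThick 𝒲)
    (hR : tR = 𝒲 ∩ R) (hQ : tQ ⊆ 𝒲) :
    tQ = Q ∩ 𝒲 ∧ IsHoveyTriple Q 𝒲 R := by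
  have htQQ : tQ ⊆ Q := by
    intro X hX
    rw [h1.1.2]
    intro Y hY
    rw [hR] at hY
    rw [h2.1.2] at hX
    exact hX Y hY.2
  have key : tQ = Q ∩ 𝒲 := by
    apply Set.Subset.antisymm
    · exact fun X hX => ⟨htQQ hX, hQ hX⟩
    · rintro X ⟨hXQ, hXW⟩
      obtain ⟨S, hSe, hX1, hX2, hX3⟩ := h2.2.2 X
      subst hX3
      have hW1 : S.X₁ ∈ 𝒲 := ((hW.2 S hSe).2.2) (hQ hX2) hXW
      have htR1 : S.X₁ ∈ tR := by rw [hR]; exact ⟨hW1, hX1⟩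
      have hext : extVanish S.X₃ S.X₁ 1 := by
        rw [h1.1.1] at htR1
        exact htR1 S.X₃ hXQ
      rw [h2.1.2]
      intro Y hY
      have hz : ∀ e : Abelian.Ext S.X₃ Y 1, e = 0 := by
        intro e
        have hsub : Subsingleton (Abelian.Ext S.X₂ Y 1) := by
          rw [h2.1.2] at hX2
          exact hX2 Y hY
        have h0 : (Abelian.Ext.mk₀ S.g).comp e (zero_add 1) = 0 :=
          hsub.elim _ _
        obtain ⟨x₁, hx₁⟩ :=
          Abelian.Ext.contravariant_sequence_exact₃ hSe Y e h0 (n₀ := 0) rfl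
        have hec : hSe.extClass = 0 := by
          have : Subsingleton (Abelian.Ext S.X₃ S.X₁ 1) := hext
          exact this.elim _ _
        rw [← hx₁, hec, Abelian.Ext.zero_comp]
      exact ⟨fun a b => by rw [hz a, hz b]⟩
  refine ⟨key, hW, ?_, ?_⟩
  · rw [← key]; exact h2
  · rw [← hR]; exact h1
end

section
/- Let M = (C, W, F) and M' = (C, W', F') be two abelian model structures on the same abelian category with the same class C of cofibrant objects and with F' ⊆ F. Then W ⊆ W'. -/
open CategoryTheory Limits

universe w v u

theorem statement5 {A : Type u} [Category.{v} A] [Abelian A] [HasExt.{w} A]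
    (𝒞 𝒲 ℱ 𝒲' ℱ' : Set A)
    (h : IsHoveyTriple 𝒞 𝒲 ℱ) (h' : IsHoveyTriple 𝒞 𝒲' ℱ')
    (hF : ℱ' ⊆ ℱ) : 𝒲 ⊆ 𝒲' := by
  obtain ⟨thickW, cpCW_F, cpC_WF⟩ := h
  obtain ⟨thickW', cpCW'_F', cpC_W'F'⟩ := h'
  -- trivially fibrant classes agree
  have hWF : 𝒲 ∩ ℱ = 𝒲' ∩ ℱ' := by
    rw [cpC_WF.1.1, cpC_W'F'.1.1]
  -- trivially cofibrant classes containment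
  have hCW : 𝒞 ∩ 𝒲 ⊆ 𝒞 ∩ 𝒲' := by
    rw [cpCW_F.1.2, cpCW'_F'.1.2]
    intro X hX Y hY
    exact hX Y (hF hY)
  intro X hX
  obtain ⟨S, hSE, h1, h2, h3⟩ := cpC_WF.2.2 X
  have h1W : S.X₁ ∈ 𝒲 := h1.1
  have h3W : S.X₃ ∈ 𝒲 := h3 ▸ hX
  have h2W : S.X₂ ∈ 𝒲 := ((thickW.2 S hSE).2.1) h1W h3W
  have h2W' : S.X₂ ∈ 𝒲' := (hCW ⟨h2, h2W⟩).2
  have h1W' : S.X₁ ∈ 𝒲' := (hWF ▸ h1 : S.X₁ ∈ 𝒲' ∩ ℱ').1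
  have : S.X₃ ∈ 𝒲' := ((thickW'.2 S hSE).1) h1W' h2W'
  exact h3 ▸ this
end

section
/- Let M₁ = (C, W₁, F₁), M₂ = (C, W₂, F₂), M₃ = (C, W₃, F₃) be hereditary abelian model structures on an abelian category with equal cores C ∩ Wᵢ ∩ Fᵢ. Then the following two conditions are equivalent: (i) W₃ ∩ F₁ = F₂ and F₃ ⊆ F₁; (ii) (C ∩ W₂) ∩ W₃ = C ∩ W₁ and F₂ ⊆ W₃. -/
open CategoryTheory Limits

universe w v u

section AuxLemmas

variable {A : Type u} [Category.{v} A] [Abelian A] [HasExt.{w} A]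

lemma extVanish_of_ses {S : ShortComplex A} (hS : S.ShortExact) {X : A}
    (h2 : extVanish X S.X₂ 1) (h3 : extVanish S.X₃ S.X₁ 1) :
    extVanish X S.X₁ 1 := by
  have hzero : ∀ e : Abelian.Ext X S.X₁ 1, e = 0 := by
    intro e
    have h1 : e.comp (Abelian.Ext.mk₀ S.f) (add_zero 1) = 0 := h2.allEq _ _
    obtain ⟨x₃, hx₃⟩ := Abelian.Ext.covariant_sequence_exact₁ X hS e h1 (rfl : 0 + 1 = 1)
    have hext : hS.extClass = 0 := h3.allEq _ _
    rw [← hx₃, hext]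
    simp
  exact ⟨fun a b => by rw [hzero a, hzero b]⟩

lemma leftPerp_anti {𝒴 𝒴' : Set A} (h : 𝒴 ⊆ 𝒴') : leftPerp 𝒴' ⊆ leftPerp 𝒴 :=
  fun _ hX Y hY => hX Y (h hY)

lemma rightPerp_anti {𝒳 𝒳' : Set A} (h : 𝒳 ⊆ 𝒳') : rightPerp 𝒳' ⊆ rightPerp 𝒳 :=
  fun _ hY X hX => hY X (h hX)

end AuxLemmas

theorem statement6 {A : Type u} [Category.{v} A] [Abelian A] [HasExt.{w} A]
    (𝒞 𝒲₁ ℱ₁ 𝒲₂ ℱ₂ 𝒲₃ ℱ₃ : Set A)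
    (h1 : IsHereditaryHoveyTriple 𝒞 𝒲₁ ℱ₁)
    (h2 : IsHereditaryHoveyTriple 𝒞 𝒲₂ ℱ₂)
    (h3 : IsHereditaryHoveyTriple 𝒞 𝒲₃ ℱ₃)
    (hcore12 : 𝒞 ∩ 𝒲₁ ∩ ℱ₁ = 𝒞 ∩ 𝒲₂ ∩ ℱ₂)
    (hcore13 : 𝒞 ∩ 𝒲₁ ∩ ℱ₁ = 𝒞 ∩ 𝒲₃ ∩ ℱ₃) :
    (𝒲₃ ∩ ℱ₁ = ℱ₂ ∧ ℱ₃ ⊆ ℱ₁) ↔ ((𝒞 ∩ 𝒲₂) ∩ 𝒲₃ = 𝒞 ∩ 𝒲₁ ∧ ℱ₂ ⊆ 𝒲₃) := by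
  obtain ⟨⟨thick1, cp1a, cp1b⟩, -, -⟩ := h1
  obtain ⟨⟨thick2, cp2a, cp2b⟩, -, -⟩ := h2
  obtain ⟨⟨thick3, cp3a, cp3b⟩, -, -⟩ := h3
  have hF1 : ℱ₁ = rightPerp (𝒞 ∩ 𝒲₁) := cp1a.1.1
  have hC1 : 𝒞 ∩ 𝒲₁ = leftPerp ℱ₁ := cp1a.1.2
  have hF2 : ℱ₂ = rightPerp (𝒞 ∩ 𝒲₂) := cp2a.1.1
  have hC2 : 𝒞 ∩ 𝒲₂ = leftPerp ℱ₂ := cp2a.1.2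
  have hC3 : 𝒞 ∩ 𝒲₃ = leftPerp ℱ₃ := cp3a.1.2
  have hFt12 : 𝒲₂ ∩ ℱ₂ = 𝒲₁ ∩ ℱ₁ := by rw [cp2b.1.1, cp1b.1.1]
  constructor
  · rintro ⟨hWF, hF31⟩
    have hF21 : ℱ₂ ⊆ ℱ₁ := by rw [← hWF]; exact Set.inter_subset_right
    have hC12 : 𝒞 ∩ 𝒲₁ ⊆ 𝒞 ∩ 𝒲₂ := by
      rw [hC1, hC2]; exact leftPerp_anti hF21
    have hC13 : 𝒞 ∩ 𝒲₁ ⊆ 𝒞 ∩ 𝒲₃ := by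
      rw [hC1, hC3]; exact leftPerp_anti hF31
    refine ⟨Set.Subset.antisymm ?_ (fun X hX => ⟨hC12 hX, (hC13 hX).2⟩), ?_⟩
    · rintro X ⟨⟨hXC, hXW2⟩, hXW3⟩
      obtain ⟨S, hS, hSF, hSV, hSX⟩ := cp1a.2.2 X
      have hVW2 : S.X₂ ∈ 𝒲₂ := (hC12 hSV).2
      have hVW3 : S.X₂ ∈ 𝒲₃ := (hC13 hSV).2
      have hFW2 : S.X₁ ∈ 𝒲₂ := (thick2.2 S hS).2.2 hVW2 (by rw [hSX]; exact hXW2)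
      have hFW3 : S.X₁ ∈ 𝒲₃ := (thick3.2 S hS).2.2 hVW3 (by rw [hSX]; exact hXW3)
      have hFF2 : S.X₁ ∈ ℱ₂ := by rw [← hWF]; exact ⟨hFW3, hSF⟩
      have hmem : S.X₁ ∈ 𝒲₂ ∩ ℱ₂ := ⟨hFW2, hFF2⟩
      rw [hFt12] at hmem
      have hFW1 : S.X₁ ∈ 𝒲₁ := hmem.1
      have hXW1 : S.X₃ ∈ 𝒲₁ := (thick1.2 S hS).1 hFW1 hSV.2
      exact ⟨hXC, hSX ▸ hXW1⟩
    · intro F hF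
      rw [← hWF] at hF
      exact hF.1
  · rintro ⟨hCW, hF2W3⟩
    have hC12 : 𝒞 ∩ 𝒲₁ ⊆ 𝒞 ∩ 𝒲₂ := by rw [← hCW]; exact Set.inter_subset_left
    have hF21 : ℱ₂ ⊆ ℱ₁ := by
      rw [hF1, hF2]; exact rightPerp_anti hC12
    refine ⟨Set.Subset.antisymm ?_ (fun F hF => ⟨hF2W3 hF, hF21 hF⟩), ?_⟩
    · rintro F ⟨hFW3, hFF1⟩
      rw [hF2]
      intro X hX
      obtain ⟨S, hS, hSX1, hSX2, hSX3⟩ := cp2a.2.1 F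
      have hV2W3 : S.X₃ ∈ 𝒲₃ :=
        (thick3.2 S hS).1 (by rw [hSX1]; exact hFW3) (hF2W3 hSX2)
      have hV2C1 : S.X₃ ∈ 𝒞 ∩ 𝒲₁ := hCW ▸ (⟨hSX3, hV2W3⟩ : S.X₃ ∈ (𝒞 ∩ 𝒲₂) ∩ 𝒲₃)
      have h3' : extVanish S.X₃ S.X₁ 1 :=
        (hC1 ▸ hV2C1) S.X₁ (by rw [hSX1]; exact hFF1)
      have h2' : extVanish X S.X₂ 1 := (hF2 ▸ hSX2) X hX
      have := extVanish_of_ses hS h2' h3'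
      rwa [hSX1] at this
    · intro F hF
      rw [hF1]
      intro X hX
      rw [← hCW] at hX
      have hXm : X ∈ 𝒞 ∩ 𝒲₃ := ⟨hX.1.1, hX.2⟩
      rw [hC3] at hXm
      exact hXm F hF
end

section
/- Let (C̃₁, F₁) and (C̃₂, F₂) be complete hereditary cotorsion pairs in an abelian category with F₂ ⊆ F₁ and C̃₁ ∩ F₁ = C̃₂ ∩ F₂. Then the class W = {X : there exists a short exact sequence 0 → X → F → C → 0 with F ∈ F₂ and C ∈ C̃₁} coincides with the class {X : there exists a short exact sequence 0 → F' → C' → X → 0 with F' ∈ F₂ and C' ∈ C̃₁}. -/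
/-!
Given `0 → X → F → C → 0` with `F ∈ ℱ₂` and `C ∈ C̃₁`, take a special `C̃₂`-precover
`0 → F' → P → F → 0`. Then `P` is an extension of objects of `ℱ₂`, so it lies in
`C̃₂ ∩ ℱ₂ = C̃₁ ∩ ℱ₁`. Pulling back along `X → F` gives `0 → F' → Q → X → 0` and
`0 → Q → P → C → 0`, and the second sequence puts `Q` in `C̃₁`, which is closed under kernels of
epimorphisms because `Ext²(C̃₁, ℱ₁) = 0`. The converse inclusion is dual, with a pushout along
a special `ℱ₁`-preenvelope.
-/

open CategoryTheory Limits

universe w v u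

lemma extVanish_iff_forall_eq_zero {A : Type u} [Category.{v} A] [Abelian A] [HasExt.{w} A]
    {X Y : A} {n : ℕ} : extVanish X Y n ↔ ∀ x : Abelian.Ext X Y n, x = 0 :=
  subsingleton_iff_forall_eq 0

namespace CategoryTheory.ShortComplex.ShortExact

variable {A : Type*} [Category A] [Abelian A] {S : ShortComplex A}

lemma shortExact_pullback_fst (hS : S.ShortExact) {X : A} (f : X ⟶ S.X₃) :
    (ShortComplex.mk (pullback.lift 0 S.f (by simp)) (pullback.fst f S.g)
      (pullback.lift_fst _ _ _)).ShortExact := by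
  have := hS.mono_f
  have := hS.epi_g
  refine .mk' ?_ (mono_of_mono_fac (pullback.lift_snd _ _ _)) inferInstance
  rw [exact_iff_exact_up_to_refinements]
  intro Z (x : Z ⟶ pullback f S.g) (hx : x ≫ pullback.fst f S.g = 0)
  refine ⟨Z, 𝟙 Z, inferInstance, hS.exact.lift (x ≫ pullback.snd _ _) ?_, ?_⟩
  · simp [← pullback.condition, reassoc_of% hx]
  · apply pullback.hom_ext <;> simp [pullback.lift_fst, pullback.lift_snd, hx]

lemma shortExact_pullback_snd (hS : S.ShortExact) {W : A} (q : W ⟶ S.X₂) [Epi q] :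
    (ShortComplex.mk (pullback.snd S.f q) (q ≫ S.g)
      (by rw [← pullback.condition_assoc, S.zero, comp_zero])).ShortExact := by
  have := hS.mono_f
  have := hS.epi_g
  refine .mk' ?_ inferInstance inferInstance
  rw [exact_iff_exact_up_to_refinements]
  intro Z (x : Z ⟶ W) (hx : x ≫ q ≫ S.g = 0)
  refine ⟨Z, 𝟙 Z, inferInstance,
    pullback.lift (hS.exact.lift (x ≫ q) (by simpa using hx)) x (by simp),
    (Category.id_comp x).trans (pullback.lift_snd _ _ _).symm⟩

lemma shortExact_pushout_inr (hS : S.ShortExact) {X : A} (v : S.X₁ ⟶ X) :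
    (ShortComplex.mk (pushout.inr S.f v) (pushout.desc S.g 0 (by simp))
      (pushout.inr_desc _ _ _)).ShortExact := by
  have := hS.mono_f
  have := hS.epi_g
  refine .mk' ?_ inferInstance (epi_of_epi_fac (pushout.inl_desc _ _ _))
  rw [exact_iff_exact_up_to_refinements]
  intro Z (y : Z ⟶ pushout S.f v) (hy : y ≫ pushout.desc S.g 0 _ = 0)
  obtain ⟨Z', π, _, x₂, x, hπ⟩ :=
    (IsPushout.of_hasPushout S.f v).hom_eq_add_up_to_refinements y
  have hx₂ : x₂ ≫ S.g = 0 := by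
    simpa [reassoc_of% hπ, pushout.inl_desc, pushout.inr_desc] using π ≫= hy
  refine ⟨Z', π, inferInstance, hS.exact.lift x₂ hx₂ ≫ v + x, ?_⟩
  simp [hπ, ← pushout.condition, add_comm]

lemma shortExact_pushout_inl (hS : S.ShortExact) {W : A} (m : S.X₂ ⟶ W) [Mono m] :
    (ShortComplex.mk (S.f ≫ m) (pushout.inl m S.g)
      (by rw [Category.assoc, pushout.condition, S.zero_assoc, zero_comp])).ShortExact := by
  have := hS.mono_f
  have := hS.epi_g
  refine .mk' (exact_of_g_is_cokernel _ (CokernelCofork.IsColimit.ofπ _ _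
    (fun k hk => pushout.desc k (hS.exact.desc (m ≫ k) (by simpa using hk)) (by simp))
    (fun k hk => pushout.inl_desc _ _ _) (fun k hk n hn => ?_))) inferInstance inferInstance
  apply pushout.hom_ext
  · simp [pushout.inl_desc, hn]
  · rw [← cancel_epi S.g]
    simp [pushout.inr_desc, ← pushout.condition_assoc, hn]

variable [HasExt.{w} A] {n : ℕ}

lemma extVanish_X₂_right (hS : S.ShortExact) (Q : A)
    (h₁ : extVanish Q S.X₁ n) (h₃ : extVanish Q S.X₃ n) : extVanish Q S.X₂ n := by
  rw [extVanish_iff_forall_eq_zero] at h₁ h₃ ⊢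
  intro x
  obtain ⟨x₁, rfl⟩ := Abelian.Ext.covariant_sequence_exact₂ Q hS x (h₃ _)
  rw [h₁ x₁, Abelian.Ext.zero_comp]

lemma extVanish_X₂_left (hS : S.ShortExact) (Y : A)
    (h₁ : extVanish S.X₁ Y n) (h₃ : extVanish S.X₃ Y n) : extVanish S.X₂ Y n := by
  rw [extVanish_iff_forall_eq_zero] at h₁ h₃ ⊢
  intro x
  obtain ⟨x₃, rfl⟩ := Abelian.Ext.contravariant_sequence_exact₂ hS Y x (h₁ _)
  rw [h₃ x₃, Abelian.Ext.comp_zero]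

lemma extVanish_X₃_right (hS : S.ShortExact) (Q : A)
    (h₂ : extVanish Q S.X₂ n) (h₁ : extVanish Q S.X₁ (n + 1)) : extVanish Q S.X₃ n := by
  rw [extVanish_iff_forall_eq_zero] at h₂ h₁ ⊢
  intro x
  obtain ⟨x₂, rfl⟩ := Abelian.Ext.covariant_sequence_exact₃ Q hS x rfl (h₁ _)
  rw [h₂ x₂, Abelian.Ext.zero_comp]

lemma extVanish_X₁_left (hS : S.ShortExact) (Y : A)
    (h₂ : extVanish S.X₂ Y n) (h₃ : extVanish S.X₃ Y (n + 1)) : extVanish S.X₁ Y n := by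
  rw [extVanish_iff_forall_eq_zero] at h₂ h₃ ⊢
  intro x
  obtain ⟨x₂, rfl⟩ := Abelian.Ext.contravariant_sequence_exact₁ hS Y x (add_comm 1 n) (h₃ _)
  rw [h₂ x₂, Abelian.Ext.comp_zero]

end CategoryTheory.ShortComplex.ShortExact

section CotorsionPair

variable {A : Type u} [Category.{v} A] [Abelian A] [HasExt.{w} A] {𝒳 𝒴 : Set A}
  {S : ShortComplex A}

lemma IsCotorsionPair.X₂_mem_left (h : IsCotorsionPair 𝒳 𝒴) (hS : S.ShortExact)
    (h₁ : S.X₁ ∈ 𝒳) (h₃ : S.X₃ ∈ 𝒳) : S.X₂ ∈ 𝒳 := by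
  rw [h.2] at h₁ h₃ ⊢
  exact fun Y hY => hS.extVanish_X₂_left Y (h₁ Y hY) (h₃ Y hY)

lemma IsCotorsionPair.X₂_mem_right (h : IsCotorsionPair 𝒳 𝒴) (hS : S.ShortExact)
    (h₁ : S.X₁ ∈ 𝒴) (h₃ : S.X₃ ∈ 𝒴) : S.X₂ ∈ 𝒴 := by
  rw [h.1] at h₁ h₃ ⊢
  exact fun Q hQ => hS.extVanish_X₂_right Q (h₁ Q hQ) (h₃ Q hQ)

lemma IsHereditaryCP.X₁_mem_left (h : IsHereditaryCP 𝒳 𝒴) (hS : S.ShortExact)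
    (h₂ : S.X₂ ∈ 𝒳) (h₃ : S.X₃ ∈ 𝒳) : S.X₁ ∈ 𝒳 := by
  rw [h.1.2] at h₂ ⊢
  exact fun Y hY => hS.extVanish_X₁_left Y (h₂ Y hY) (h.2 2 one_le_two _ h₃ Y hY)

lemma IsHereditaryCP.X₃_mem_right (h : IsHereditaryCP 𝒳 𝒴) (hS : S.ShortExact)
    (h₁ : S.X₁ ∈ 𝒴) (h₂ : S.X₂ ∈ 𝒴) : S.X₃ ∈ 𝒴 := by
  rw [h.1.1] at h₂ ⊢
  exact fun Q hQ => hS.extVanish_X₃_right Q (h₂ Q hQ) (h.2 2 one_le_two Q hQ _ h₁)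

end CotorsionPair

section TwoCotorsionPairs

variable {A : Type u} [Category.{v} A] [Abelian A] [HasExt.{w} A] {𝒞₁ ℱ₁ 𝒞₂ ℱ₂ : Set A}

lemma exists_precover_of_preenvelope (h₁ : IsHereditaryCP 𝒞₁ ℱ₁) (h₂ : IsCompleteCP 𝒞₂ ℱ₂)
    (hcore : 𝒞₂ ∩ ℱ₂ ⊆ 𝒞₁) {S : ShortComplex A} (hS : S.ShortExact) (hF : S.X₂ ∈ ℱ₂)
    (hC : S.X₃ ∈ 𝒞₁) :
    ∃ S' : ShortComplex A, S'.ShortExact ∧ S'.X₁ ∈ ℱ₂ ∧ S'.X₂ ∈ 𝒞₁ ∧ S'.X₃ = S.X₁ := by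
  obtain @⟨X, F, C, f, g, _⟩ := S
  obtain ⟨T, hT, hT₁, hT₂, rfl⟩ := h₂.2.2 F
  have hT₂F : T.X₂ ∈ ℱ₂ := h₂.1.X₂_mem_right hT hT₁ hF
  have hT₂C : T.X₂ ∈ 𝒞₁ := hcore ⟨hT₂, hT₂F⟩
  have := hT.epi_g
  exact ⟨_, hT.shortExact_pullback_fst f, hT₁,
    h₁.X₁_mem_left (hS.shortExact_pullback_snd T.g) hT₂C hC, rfl⟩

lemma exists_preenvelope_of_precover (h₁ : IsCompleteCP 𝒞₁ ℱ₁) (h₂ : IsHereditaryCP 𝒞₂ ℱ₂)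
    (hcore : 𝒞₁ ∩ ℱ₁ ⊆ ℱ₂) {S : ShortComplex A} (hS : S.ShortExact) (hF : S.X₁ ∈ ℱ₂)
    (hC : S.X₂ ∈ 𝒞₁) :
    ∃ S' : ShortComplex A, S'.ShortExact ∧ S'.X₁ = S.X₃ ∧ S'.X₂ ∈ ℱ₂ ∧ S'.X₃ ∈ 𝒞₁ := by
  obtain @⟨K, C, X, f, g, _⟩ := S
  obtain ⟨T, hT, rfl, hT₂, hT₃⟩ := h₁.2.1 C
  have hT₂C : T.X₂ ∈ 𝒞₁ := h₁.1.X₂_mem_left hT hC hT₃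
  have hT₂F : T.X₂ ∈ ℱ₂ := hcore ⟨hT₂C, hT₂⟩
  have := hT.mono_f
  exact ⟨_, hT.shortExact_pushout_inr g, rfl,
    h₂.X₃_mem_right (hS.shortExact_pushout_inl T.f) hF hT₂F, hT₃⟩

end TwoCotorsionPairs

theorem statement7_general {A : Type u} [Category.{v} A] [Abelian A] [HasExt.{w} A]
    (tC₁ ℱ₁ tC₂ ℱ₂ : Set A)
    (h1 : IsCompleteCP tC₁ ℱ₁) (h1h : IsHereditaryCP tC₁ ℱ₁)
    (h2 : IsCompleteCP tC₂ ℱ₂) (h2h : IsHereditaryCP tC₂ ℱ₂)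
    (hcore : tC₁ ∩ ℱ₁ = tC₂ ∩ ℱ₂) :
    {X : A | ∃ S : ShortComplex A, S.ShortExact ∧ S.X₁ = X ∧ S.X₂ ∈ ℱ₂ ∧ S.X₃ ∈ tC₁} =
      {X : A | ∃ S : ShortComplex A, S.ShortExact ∧ S.X₁ ∈ ℱ₂ ∧ S.X₂ ∈ tC₁ ∧ S.X₃ = X} := by
  ext X
  constructor
  · rintro ⟨S, hS, rfl, hF, hC⟩
    exact exists_precover_of_preenvelope h1h h2 (hcore.ge.trans Set.inter_subset_left) hS hF hC
  · rintro ⟨S, hS, hF, hC, rfl⟩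
    exact exists_preenvelope_of_precover h1 h2h (hcore.le.trans Set.inter_subset_right) hS hF hC

theorem statement7 {A : Type u} [Category.{v} A] [Abelian A] [HasExt.{w} A]
    (tC₁ ℱ₁ tC₂ ℱ₂ : Set A)
    (h1 : IsCompleteCP tC₁ ℱ₁) (h1h : IsHereditaryCP tC₁ ℱ₁)
    (h2 : IsCompleteCP tC₂ ℱ₂) (h2h : IsHereditaryCP tC₂ ℱ₂)
    (hF : ℱ₂ ⊆ ℱ₁) (hcore : tC₁ ∩ ℱ₁ = tC₂ ∩ ℱ₂) :
    {X : A | ∃ S : ShortComplex A, S.ShortExact ∧ S.X₁ = X ∧ S.X₂ ∈ ℱ₂ ∧ S.X₃ ∈ tC₁} =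
      {X : A | ∃ S : ShortComplex A, S.ShortExact ∧ S.X₁ ∈ ℱ₂ ∧ S.X₂ ∈ tC₁ ∧ S.X₃ = X} :=
  statement7_general tC₁ ℱ₁ tC₂ ℱ₂ h1 h1h h2 h2h hcore
end

section
/- Let R be a ring. Let dw(F) denote the class of chain complexes of flat R-modules, dw(P) the class of complexes of projective modules, and F̃ the class of exact complexes of flat modules with flat cycle modules. Given Neeman's theorem that F̃ = dw(F) ∩ dw(P)^⊥, and given that (dw(F), dw(F)^⊥) and (F̃, F̃^⊥) are complete cotorsion pairs with dw(P)^⊥ thick, conclude that (dw(F), dw(P)^⊥, F̃^⊥) is a Hovey triple on Ch(R). -/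
open CategoryTheory Limits

universe w v u

/-!
The weakly trivial objects of the would-be model structure are the contraacyclic complexes
`W = dw(P)^⊥`, and Neeman's theorem says that the trivially cofibrant ones are exactly `F̃`.
What remains is to identify the trivially fibrant objects: `W ∩ F̃^⊥ = dw(F)^⊥`. The inclusion
`⊇` holds because `dw(P) ⊆ dw(F)` and `F̃ ⊆ dw(F)`. Conversely, for `Y ∈ W ∩ F̃^⊥` take a special
preenvelope `0 → Y → X₂ → X₃ → 0` with `X₂ ∈ dw(F)^⊥ ⊆ W` and `X₃ ∈ dw(F)`; thickness puts `X₃` in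
`W`, hence in `F̃`, so the sequence splits (its class lies in `Ext¹(X₃, Y) = 0`) and `Y` inherits
membership in `dw(F)^⊥` from `X₂`.
-/

section Cotorsion

variable {A : Type u} [Category.{v} A] [Abelian A] [HasExt.{w} A]

lemma mem_rightPerp_of_extClass_eq_zero {𝒳 : Set A} {S : ShortComplex A} (hS : S.ShortExact)
    (hcls : hS.extClass = 0) (h₂ : S.X₂ ∈ rightPerp 𝒳) : S.X₁ ∈ rightPerp 𝒳 := by
  intro X hX
  suffices h : ∀ e : Abelian.Ext X S.X₁ 1, e = 0 from ⟨fun a b => by rw [h a, h b]⟩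
  intro e
  have : e.comp (Abelian.Ext.mk₀ S.f) (add_zero 1) = 0 := (h₂ X hX).elim _ _
  obtain ⟨x₃, hx₃⟩ := Abelian.Ext.covariant_sequence_exact₁ X hS e this rfl
  rw [hcls, Abelian.Ext.comp_zero] at hx₃
  exact hx₃.symm

lemma inter_rightPerp_eq_of_completeCP {𝒬 𝒬' 𝒲 : Set A} (hQ : IsCompleteCP 𝒬 (rightPerp 𝒬))
    (hW : IsThick 𝒲) (hQ' : 𝒬' = 𝒬 ∩ 𝒲) (hQW : rightPerp 𝒬 ⊆ 𝒲) :
    𝒲 ∩ rightPerp 𝒬' = rightPerp 𝒬 := by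
  refine subset_antisymm ?_ fun Y hY => ⟨hQW hY, rightPerp_anti (hQ' ▸ Set.inter_subset_left) hY⟩
  rintro Y ⟨hYW, hYR⟩
  obtain ⟨S, hS, rfl, hX₂, hX₃⟩ := hQ.2.1 Y
  have hX₃Q' : S.X₃ ∈ 𝒬' := hQ' ▸ ⟨hX₃, (hW.2 S hS).1 hYW (hQW hX₂)⟩
  exact mem_rightPerp_of_extClass_eq_zero hS ((hYR _ hX₃Q').elim _ _) hX₂

theorem isHoveyTriple_of_completeCP {𝒬 𝒬' 𝒲 : Set A} (hQ : IsCompleteCP 𝒬 (rightPerp 𝒬))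
    (hQ' : IsCompleteCP 𝒬' (rightPerp 𝒬')) (hW : IsThick 𝒲) (hQ'W : 𝒬' = 𝒬 ∩ 𝒲)
    (hQW : rightPerp 𝒬 ⊆ 𝒲) : IsHoveyTriple 𝒬 𝒲 (rightPerp 𝒬') := by
  refine ⟨hW, hQ'W ▸ hQ', ?_⟩
  rwa [inter_rightPerp_eq_of_completeCP hQ hW hQ'W hQW]

end Cotorsion

theorem statement9_general (R : Type u) [CommRing R]
    [HasExt.{w} (ChainComplex (ModuleCat.{u} R) ℤ)]
    (dwF : Set (ChainComplex (ModuleCat.{u} R) ℤ))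
    (hdwF : dwF = {X | ∀ n, Module.Flat R (X.X n)})
    (dwP : Set (ChainComplex (ModuleCat.{u} R) ℤ))
    (hdwP : dwP = {X | ∀ n, Projective (X.X n)})
    (tF : Set (ChainComplex (ModuleCat.{u} R) ℤ))
    (hNeeman : tF = dwF ∩ rightPerp dwP)
    (h1 : IsCompleteCP dwF (rightPerp dwF))
    (h2 : IsCompleteCP tF (rightPerp tF))
    (hthick : IsThick (rightPerp dwP)) :
    IsHoveyTriple dwF (rightPerp dwP) (rightPerp tF) := by
  have hPF : dwP ⊆ dwF := by
    subst hdwP hdwF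
    intro X hX n
    have := hX n
    exact Module.Flat.of_projective
  exact isHoveyTriple_of_completeCP h1 h2 hthick hNeeman (rightPerp_anti hPF)

theorem statement9 (R : Type u) [CommRing R]
    [HasExt.{w} (ChainComplex (ModuleCat.{u} R) ℤ)]
    (dwF : Set (ChainComplex (ModuleCat.{u} R) ℤ))
    (hdwF : dwF = {X | ∀ n, Module.Flat R (X.X n)})
    (dwP : Set (ChainComplex (ModuleCat.{u} R) ℤ))
    (hdwP : dwP = {X | ∀ n, Projective (X.X n)})
    (tF : Set (ChainComplex (ModuleCat.{u} R) ℤ))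
    (htF : tF = {X | (∀ n, Module.Flat R (X.X n)) ∧ (∀ n, X.ExactAt n) ∧
      ∀ n, Module.Flat R (X.cycles n)})
    (hNeeman : tF = dwF ∩ rightPerp dwP)
    (h1 : IsCompleteCP dwF (rightPerp dwF))
    (h2 : IsCompleteCP tF (rightPerp tF))
    (hthick : IsThick (rightPerp dwP)) :
    IsHoveyTriple dwF (rightPerp dwP) (rightPerp tF) :=
  statement9_general R dwF hdwF dwP hdwP tF hNeeman h1 h2 hthick
end

section
/- Let M = (C, W, F) be an abelian model structure on an abelian category. Then a morphism f is a weak equivalence if and only if f factors as f = p ∘ i where i is a monomorphism with cokernel in W and p is an epimorphism with kernel in W. -/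
open CategoryTheory Limits

universe w v u

/-!
Only the converse needs an argument. The complete cotorsion pair `(𝒞, 𝒲 ∩ ℱ)` factors `f` as
`i₀ ≫ p₀` with `i₀` a cofibration and `p₀` a trivial fibration (add an epi `P ⟶ Y` with
`P ∈ 𝒞` to make `f` epi, then push its kernel out along a special `𝒲 ∩ ℱ`-preenvelope), so it
suffices to show `coker i₀ ∈ 𝒲`. Let `j : X ⟶ Z ×_Y Z₀` be induced by `i` and `i₀`. For an epi
`t` with `j ≫ t` mono there is a short exact sequence `0 → ker t → coker j → coker (j ≫ t) → 0`;
the two projections have kernels `ker p₀` and `ker p`, so two out of three for `𝒲` gives first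
`coker j ∈ 𝒲` and then `coker i₀ ∈ 𝒲`.
-/

section ShortExact

variable {A : Type u} [Category.{v} A] [Abelian A] {X Y Z : A} (f : X ⟶ Y) (g : Y ⟶ Z)

lemma shortExact_cokernel_comp [Mono g] :
    (ShortComplex.mk (cokernel.map f (f ≫ g) (𝟙 X) g (by simp))
      (cokernel.map (f ≫ g) g f (𝟙 Z) (by simp)) (by ext; simp)).ShortExact := by
  have hS := kernelCokernelCompSequence_exact f g
  have hm := (hS.exact 2).mono_g ((isZero_kernel_of_mono g).eq_of_src _ _)
  exact .mk' (hS.exact 3) hm inferInstance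

lemma shortExact_kernel_cokernel_comp [Epi g] [Mono (f ≫ g)] :
    (ShortComplex.mk (kernelCokernelCompSequence.δ f g)
      (cokernel.map f (f ≫ g) (𝟙 X) g (by simp))
      (by simp [kernelCokernelCompSequence.δ_fac])).ShortExact := by
  have hS := kernelCokernelCompSequence_exact f g
  have hm := (hS.exact 1).mono_g ((isZero_kernel_of_mono (f ≫ g)).eq_of_src _ _)
  have he := (hS.exact 3).epi_f ((isZero_cokernel_of_epi g).eq_of_tgt _ _)
  exact .mk' (hS.exact 2) hm he

end ShortExact

def CategoryTheory.IsPushout.isCokernelOfIsCokernel {A : Type u} [Category.{v} A]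
    [HasZeroMorphisms A] {X₁ X₂ X₃ X₄ : A} {t : X₁ ⟶ X₂} {l : X₁ ⟶ X₃} {r : X₂ ⟶ X₄} {b : X₃ ⟶ X₄}
    (sq : IsPushout t l r b) {c : CokernelCofork t} (hc : IsColimit c) {q : X₄ ⟶ c.pt}
    (hr : r ≫ q = c.π) (hb : b ≫ q = 0) : IsColimit (CokernelCofork.ofπ q hb) :=
  CokernelCofork.IsColimit.ofπ _ _
    (fun s hs => hc.desc (CokernelCofork.ofπ (r ≫ s) (by rw [← Category.assoc, sq.w,
      Category.assoc, hs, comp_zero])))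
    (fun s hs => sq.hom_ext (by simp [reassoc_of% hr]) (by simp [reassoc_of% hb, hs]))
    (fun s hs m hm => Cofork.IsColimit.hom_ext hc (by
      rw [Cofork.IsColimit.π_desc, Cofork.π_ofπ, ← hr, Category.assoc, hm]))

section Thick

variable {A : Type u} [Category.{v} A] [Abelian A] {𝒲 : Set A}

lemma IsThick.mem_of_iso (hT : IsThick 𝒲) {X Y : A} (e : X ≅ Y) (hX : X ∈ 𝒲) : Y ∈ 𝒲 :=
  hT.1 Y X ⟨e.inv, e.hom, e.inv_hom_id⟩ hX

lemma IsThick.cokernel_mem_iff (hT : IsThick 𝒲) {X Y Z : A} (j : X ⟶ Y) (t : Y ⟶ Z)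
    [Epi t] [Mono (j ≫ t)] (hker : kernel t ∈ 𝒲) :
    cokernel j ∈ 𝒲 ↔ cokernel (j ≫ t) ∈ 𝒲 := by
  have h := hT.2 _ (shortExact_kernel_cokernel_comp j t)
  exact ⟨h.1 hker, h.2.1 hker⟩

lemma IsThick.cokernel_mem_of_comp_eq (hT : IsThick 𝒲) {X Y Z Z₀ : A} {i : X ⟶ Z} {p : Z ⟶ Y}
    {i₀ : X ⟶ Z₀} {p₀ : Z₀ ⟶ Y} [Mono i] [Mono i₀] [Epi p] [Epi p₀] (hf : i ≫ p = i₀ ≫ p₀)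
    (hi : cokernel i ∈ 𝒲) (hp : kernel p ∈ 𝒲) (hp₀ : kernel p₀ ∈ 𝒲) : cokernel i₀ ∈ 𝒲 := by
  obtain ⟨j, hj_fst, hj_snd⟩ : ∃ j : X ⟶ pullback p p₀,
      j ≫ pullback.fst p p₀ = i ∧ j ≫ pullback.snd p p₀ = i₀ :=
    ⟨pullback.lift i i₀ hf, pullback.lift_fst _ _ _, pullback.lift_snd _ _ _⟩
  have sq := IsPullback.of_hasPullback p p₀
  have := isIso_kernel_map_of_isPullback sq
  have := isIso_kernel_map_of_isPullback sq.flip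
  have hfst : kernel (pullback.fst p p₀) ∈ 𝒲 :=
    hT.mem_of_iso (asIso (kernel.map _ _ _ _ sq.w)).symm hp₀
  have hsnd : kernel (pullback.snd p p₀) ∈ 𝒲 :=
    hT.mem_of_iso (asIso (kernel.map _ _ _ _ sq.flip.w)).symm hp
  have : Mono (j ≫ pullback.fst p p₀) := hj_fst ▸ inferInstance
  have : Mono (j ≫ pullback.snd p p₀) := hj_snd ▸ inferInstance
  have hj : cokernel j ∈ 𝒲 := (hT.cokernel_mem_iff j _ hfst).2 (hj_fst ▸ hi)
  exact hj_snd ▸ (hT.cokernel_mem_iff j _ hsnd).1 hj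

end Thick

section Cotorsion

open Abelian

variable {A : Type u} [Category.{v} A] [Abelian A] [HasExt.{w} A]

lemma extVanish_of_iso_left {X X' Y : A} (e : X ≅ X') {n : ℕ} (h : extVanish X Y n) :
    extVanish X' Y n := by
  have : Subsingleton (Ext X Y n) := h
  refine Function.LeftInverse.injective (f := fun c => (Ext.mk₀ e.hom).comp c (zero_add n))
    (g := fun c => (Ext.mk₀ e.inv).comp c (zero_add n)) (fun c => ?_) |>.subsingleton
  simp [Ext.mk₀_comp_mk₀_assoc]

lemma extVanish_of_iso_right {X Y Y' : A} (e : Y ≅ Y') {n : ℕ} (h : extVanish X Y n) :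
    extVanish X Y' n := by
  have : Subsingleton (Ext X Y n) := h
  refine Function.LeftInverse.injective (f := fun c => c.comp (Ext.mk₀ e.inv) (add_zero n))
    (g := fun c => c.comp (Ext.mk₀ e.hom) (add_zero n)) (fun c => ?_) |>.subsingleton
  simp

variable {𝒳 𝒴 : Set A}

lemma IsCotorsionPair.mem_left_of_iso (h : IsCotorsionPair 𝒳 𝒴) {X X' : A} (e : X ≅ X')
    (hX : X ∈ 𝒳) : X' ∈ 𝒳 := by
  rw [h.2] at hX ⊢
  exact fun Y hY => extVanish_of_iso_left e (hX Y hY)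

lemma IsCotorsionPair.mem_right_of_iso (h : IsCotorsionPair 𝒳 𝒴) {Y Y' : A} (e : Y ≅ Y')
    (hY : Y ∈ 𝒴) : Y' ∈ 𝒴 := by
  rw [h.1] at hY ⊢
  exact fun X hX => extVanish_of_iso_right e (hY X hX)

lemma IsCotorsionPair.mem_left_of_shortExact (h : IsCotorsionPair 𝒳 𝒴) {S : ShortComplex A}
    (hS : S.ShortExact) (h₁ : S.X₁ ∈ 𝒳) (h₃ : S.X₃ ∈ 𝒳) : S.X₂ ∈ 𝒳 := by
  rw [h.2] at h₁ h₃ ⊢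
  intro Y hY
  have : Subsingleton (Ext S.X₃ Y 1) := h₃ Y hY
  refine subsingleton_of_forall_eq 0 fun c => ?_
  obtain ⟨c₃, rfl⟩ := Ext.contravariant_sequence_exact₂ hS Y c
    (@Subsingleton.elim _ (h₁ Y hY) _ 0)
  rw [Subsingleton.elim c₃ 0, Ext.comp_zero]

lemma IsCompleteCP.exists_mono_cokernel_mem_left (h : IsCompleteCP 𝒳 𝒴) (M : A) :
    ∃ (N : A) (u : M ⟶ N), Mono u ∧ N ∈ 𝒴 ∧ cokernel u ∈ 𝒳 := by
  obtain ⟨S, hS, rfl, hN, hC⟩ := h.2.1 M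
  exact ⟨S.X₂, S.f, hS.mono_f, hN, h.1.mem_left_of_iso
    ((cokernelIsCokernel S.f).coconePointUniqueUpToIso hS.gIsCokernel).symm hC⟩

lemma IsCompleteCP.exists_epi_from_left (h : IsCompleteCP 𝒳 𝒴) (M : A) :
    ∃ (P : A) (p : P ⟶ M), Epi p ∧ P ∈ 𝒳 := by
  obtain ⟨S, hS, -, hP, rfl⟩ := h.2.2 M
  exact ⟨S.X₂, S.g, hS.epi_g, hP⟩

lemma IsCompleteCP.exists_factorization_of_epi (h : IsCompleteCP 𝒳 𝒴) {P Y : A} (e : P ⟶ Y)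
    [Epi e] : ∃ (Z : A) (j : P ⟶ Z) (q : Z ⟶ Y),
      e = j ≫ q ∧ Mono j ∧ cokernel j ∈ 𝒳 ∧ Epi q ∧ kernel q ∈ 𝒴 := by
  obtain ⟨N, u, _, hN, hcoker⟩ := h.exists_mono_cokernel_mem_left (kernel e)
  have sq := IsPushout.of_hasPushout (kernel.ι e) u
  let q : pushout (kernel.ι e) u ⟶ Y := pushout.desc e 0 (by simp)
  have hinl : pushout.inl _ _ ≫ q = e := pushout.inl_desc _ _ _
  have hinr : pushout.inr _ _ ≫ q = 0 := pushout.inr_desc _ _ _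
  have := isIso_cokernel_map_of_isPushout sq.flip
  have he : IsColimit (CokernelCofork.ofπ e (kernel.condition e)) :=
    epiIsCokernelOfKernel (KernelFork.ofι _ (kernel.condition e)) (kernelIsKernel e)
  have hq : IsLimit (KernelFork.ofι _ hinr) :=
    monoIsKernelOfCokernel _ (sq.isCokernelOfIsCokernel he hinl hinr)
  exact ⟨_, pushout.inl _ _, q, hinl.symm, inferInstance,
    h.1.mem_left_of_iso (asIso (cokernel.map _ _ _ _ sq.flip.w)) hcoker, epi_of_epi_fac hinl,
    h.1.mem_right_of_iso ((kernelIsKernel q).conePointUniqueUpToIso hq).symm hN⟩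

lemma IsCompleteCP.exists_factorization (h : IsCompleteCP 𝒳 𝒴) {X Y : A} (f : X ⟶ Y) :
    ∃ (Z : A) (i : X ⟶ Z) (p : Z ⟶ Y),
      f = i ≫ p ∧ Mono i ∧ cokernel i ∈ 𝒳 ∧ Epi p ∧ kernel p ∈ 𝒴 := by
  obtain ⟨P, p, _, hP⟩ := h.exists_epi_from_left Y
  have : Epi (biprod.desc f p) := epi_of_epi_fac (biprod.inr_desc f p)
  obtain ⟨Z, j, q, he, _, hj_coker, hq, hq_ker⟩ :=
    h.exists_factorization_of_epi (biprod.desc f p)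
  refine ⟨Z, biprod.inl ≫ j, q, by rw [Category.assoc, ← he, biprod.inl_desc], mono_comp _ _,
    ?_, hq, hq_ker⟩
  exact h.1.mem_left_of_shortExact (shortExact_cokernel_comp biprod.inl j)
    (h.1.mem_left_of_iso cokernelBiprodInlIso.symm hP) hj_coker

end Cotorsion

theorem statement11 {A : Type u} [Category.{v} A] [Abelian A] [HasExt.{w} A]
    (𝒞 𝒲 ℱ : Set A) (h : IsHoveyTriple 𝒞 𝒲 ℱ) {X Y : A} (f : X ⟶ Y) :
    (∃ (Z : A) (i : X ⟶ Z) (p : Z ⟶ Y), f = i ≫ p ∧ Mono i ∧ cokernel i ∈ 𝒞 ∩ 𝒲 ∧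
      Epi p ∧ kernel p ∈ 𝒲 ∩ ℱ) ↔
    (∃ (Z : A) (i : X ⟶ Z) (p : Z ⟶ Y), f = i ≫ p ∧ Mono i ∧ cokernel i ∈ 𝒲 ∧
      Epi p ∧ kernel p ∈ 𝒲) := by
  refine ⟨fun ⟨Z, i, p, hf, hi, hi_coker, hp, hp_ker⟩ =>
    ⟨Z, i, p, hf, hi, hi_coker.2, hp, hp_ker.1⟩, fun ⟨Z, i, p, hf, _, hi_coker, _, hp_ker⟩ => ?_⟩
  obtain ⟨Z₀, i₀, p₀, hf₀, hi₀, hi₀_coker, hp₀, hp₀_ker⟩ := h.2.2.exists_factorization f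
  exact ⟨Z₀, i₀, p₀, hf₀, hi₀, ⟨hi₀_coker, h.1.cokernel_mem_of_comp_eq (hf ▸ hf₀)
    hi_coker hp_ker hp₀_ker.1⟩, hp₀, hp₀_ker⟩
end

section
/- Let M₁ = (C, W₁, F₁) and M₂ = (C, W₂, F₂) be hereditary abelian model structures on an abelian category with equal cores and F₂ ⊆ F₁, and let M₁/M₂ = (C ∩ W₂, W, F₁) be the right localization Hovey triple. Then the kernel of the fibrant replacement functor R₁: Ho(M₁) → Ho(M₁/M₂) (objects sent to zero) is exactly the class W of trivial objects of M₁/M₂. -/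
open CategoryTheory Limits

universe w v u

theorem statement14 {A : Type u} [Category.{v} A] [Abelian A] [HasExt.{w} A]
    (𝒞 𝒲₁ ℱ₁ 𝒲₂ ℱ₂ 𝒲 : Set A)
    (h1 : IsHereditaryHoveyTriple 𝒞 𝒲₁ ℱ₁)
    (h2 : IsHereditaryHoveyTriple 𝒞 𝒲₂ ℱ₂)
    (hcore : 𝒞 ∩ 𝒲₁ ∩ ℱ₁ = 𝒞 ∩ 𝒲₂ ∩ ℱ₂) (hF : ℱ₂ ⊆ ℱ₁)
    (hloc : IsHoveyTriple (𝒞 ∩ 𝒲₂) 𝒲 ℱ₁)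
    (hlocC : (𝒞 ∩ 𝒲₂) ∩ 𝒲 = 𝒞 ∩ 𝒲₁) (hlocF : 𝒲 ∩ ℱ₁ = ℱ₂) :
    ∀ (X : A) (S : ShortComplex A), S.ShortExact → S.X₁ = X → S.X₂ ∈ ℱ₁ →
      S.X₃ ∈ 𝒞 ∩ 𝒲₁ → (S.X₂ ∈ 𝒲 ↔ X ∈ 𝒲) := by
  intro X S hS hX1 hF1 hC
  subst hX1
  have hW3 : S.X₃ ∈ 𝒲 := by
    rw [← hlocC] at hC
    exact hC.2
  have h23 := (hloc.1.2 S hS)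
  constructor
  · intro h2
    exact h23.2.2 h2 hW3
  · intro h1'
    exact h23.2.1 h1' hW3
end
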